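/- arXiv:1309.2128 — 4 statements merged into one kernel-verified Lean document; each statement's English description precedes it below -/
import Mathlib

section
/- Let A be a type in universe u, and suppose k : Ordinal.{u} → A and f : A → A → A → A satisfy: (i) f (k α) (k α) x = k 0 for every ordinal α and every x ∈ A, and (ii) f (k α) (k β) x = x for all distinct ordinals α ≠ β and every x ∈ A. Then every element x of A equals k 0; in particular A is a subsingleton. (This is the key step of the paper's Theorem 2.1: every small algebra of the displayed large equational theory is a singleton, so the theory has free small algebras although it does not have small free algebras.) -/
universe u

theorem forall_eq_of_not_injective {A I : Type*} {k : I → A} {f : A → A → A → A} {c : A}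
    (hdiag : ∀ i x, f (k i) (k i) x = c) (hoff : ∀ i j, i ≠ j → ∀ x, f (k i) (k j) x = x)
    (hk : ¬ Function.Injective k) (x : A) : x = c := by
  obtain ⟨i, j, hkij, hij⟩ := Function.not_injective_iff.mp hk
  rw [← hoff i j hij x, hkij, hdiag]

/-- Key step of Theorem 2.1: in any small algebra of the large theory with constants
`k α` for every ordinal `α` and a ternary operation `f` satisfying
`f (k α) (k α) x = k 0` and `f (k α) (k β) x = x` for `α ≠ β`,
every element equals `k 0` (so the algebra is a singleton). -/
theorem every_element_eq_k_zero {A : Type u} (k : Ordinal.{u} → A) (f : A → A → A → A)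
    (h1 : ∀ (α : Ordinal.{u}) (x : A), f (k α) (k α) x = k 0)
    (h2 : ∀ (α β : Ordinal.{u}), α ≠ β → ∀ x : A, f (k α) (k β) x = x) :
    (∀ x : A, x = k 0) ∧ Subsingleton A := by
  have key : ∀ x : A, x = k 0 := forall_eq_of_not_injective h1 h2 (not_injective_of_ordinal k)
  exact ⟨key, subsingleton_of_forall_eq (k 0) key⟩
end

section
/- Let X be a set, (x_i)_{i∈ℕ} a sequence of elements of X, and (a_i)_{i∈ℕ} and (b_i)_{i∈ℕ} sequences of finite subsets of X. Then the sequence (a_i ∪ b_i)_{i∈ℕ} subsumes (x_i)_{i∈ℕ} if and only if at least one of (a_i)_{i∈ℕ} and (b_i)_{i∈ℕ} subsumes (x_i)_{i∈ℕ}. -/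
/-!
Colour a pair `i < j` of an infinite witness set `M` for `a ∪ b` red if `x i ∈ a j`, and blue
otherwise, in which case `x i ∈ b j`. An infinite homogeneous subset of `M`, given by Ramsey's
theorem for pairs, witnesses that `a` subsumes `x` if it is red, and that `b` does if it is blue.
Ramsey's theorem is proved with a free ultrafilter `U` containing `M`: for each `i`, the `j`
joined to `i` in one colour form a set in `U`, and either the `i` for which that colour is red, or
the `i` for which it is blue, form a set in `U`. From that set a homogeneous sequence is picked
greedily, each new term lying in the finitely many sets in `U` fixed by its predecessors.
-/

universe u

/-- A sequence `a` of finite subsets of `X` *subsumes* a sequence `x` of elements of `X`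
if there is an infinite `M ⊆ ℕ` such that for all `i, j ∈ M` with `i < j`, `x i ∈ a j`. -/
def Subsumes {X : Type u} (a : ℕ → Finset X) (x : ℕ → X) : Prop :=
  ∃ M : Set ℕ, M.Infinite ∧ ∀ i ∈ M, ∀ j ∈ M, i < j → x i ∈ a j

open Filter Set

theorem Filter.exists_infinite_subset_forall_lt_of_eventually {α : Type*} [Preorder α]
    [NoTopOrder α] {f : Filter α} [f.NeBot] (hf : f ≤ atTop) {S : Set α} (hS : S ∈ f)
    {P : α → α → Prop} (hP : ∀ i ∈ S, ∀ᶠ j in f, P i j) :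
    ∃ N ⊆ S, N.Infinite ∧ ∀ i ∈ N, ∀ j ∈ N, i < j → P i j := by
  obtain ⟨g, hgS, hg⟩ :=
    exists_seq_of_forall_finset_exists (· ∈ S) (fun i j => i < j ∧ P i j) fun s hs =>
      ((eventually_mem_set.2 hS).and <| s.eventually_all.2 fun i hi =>
        (show ∀ᶠ j in f, i < j from hf (Ioi_mem_atTop i)).and (hP i (hs i hi))).exists
  have hg_mono : StrictMono g := fun m n hmn => (hg m n hmn).1
  refine ⟨range g, range_subset_iff.2 hgS, infinite_range_of_injective hg_mono.injective, ?_⟩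
  rintro _ ⟨m, rfl⟩ _ ⟨n, rfl⟩ hlt
  exact (hg m n (hg_mono.lt_iff_lt.1 hlt)).2

theorem Set.Infinite.exists_infinite_subset_homogeneous {M : Set ℕ} (hM : M.Infinite)
    (r : ℕ → ℕ → Prop) :
    ∃ H ⊆ M, H.Infinite ∧
      ((∀ i ∈ H, ∀ j ∈ H, i < j → r i j) ∨ ∀ i ∈ H, ∀ j ∈ H, i < j → ¬r i j) := by
  have := hM.cofinite_inf_principal_neBot
  set U := Ultrafilter.of (cofinite ⊓ 𝓟 M)
  have hU : (U : Filter ℕ) ≤ cofinite ⊓ 𝓟 M := Ultrafilter.of_le _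
  have hU_atTop : (U : Filter ℕ) ≤ atTop := Nat.cofinite_eq_atTop ▸ hU.trans inf_le_left
  have hMU : M ∈ U := hU (mem_inf_of_right (mem_principal_self M))
  rcases U.mem_or_compl_mem {i ∈ M | {j | r i j} ∈ U} with hred | hblue
  · obtain ⟨H, hHS, hH, hr⟩ :=
      exists_infinite_subset_forall_lt_of_eventually hU_atTop hred fun i hi => hi.2
    exact ⟨H, hHS.trans (sep_subset _ _), hH, Or.inl hr⟩
  · obtain ⟨H, hHS, hH, hr⟩ := exists_infinite_subset_forall_lt_of_eventually hU_atTop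
      (inter_mem hMU hblue) fun i hi => U.compl_mem_iff_notMem.2 fun h => hi.2 ⟨hi.1, h⟩
    exact ⟨H, hHS.trans inter_subset_left, hH, Or.inr hr⟩

theorem Subsumes.mono {X : Type u} {a a' : ℕ → Finset X} {x : ℕ → X} (h : ∀ j, a j ⊆ a' j)
    (ha : Subsumes a x) : Subsumes a' x := by
  obtain ⟨M, hM, hx⟩ := ha
  exact ⟨M, hM, fun i hi j hj hij => h j (hx i hi j hj hij)⟩

open scoped Classical in
/-- Lemma 5.6: `(a_i ∪ b_i)` subsumes `(x_i)` iff `(a_i)` or `(b_i)` does. -/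
theorem subsumes_union_iff {X : Type u} (x : ℕ → X) (a b : ℕ → Finset X) :
    Subsumes (fun i => a i ∪ b i) x ↔ Subsumes a x ∨ Subsumes b x := by
  refine ⟨fun ⟨M, hM, hx⟩ => ?_, ?_⟩
  · obtain ⟨H, hHM, hH, hred | hblue⟩ :=
      hM.exists_infinite_subset_homogeneous fun i j => x i ∈ a j
    · exact Or.inl ⟨H, hH, hred⟩
    · refine Or.inr ⟨H, hH, fun i hi j hj hij => ?_⟩
      exact (Finset.mem_union.1 (hx i (hHM hi) j (hHM hj) hij)).resolve_left
        (hblue i hi j hj hij)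
  · rintro (h | h)
    exacts [h.mono fun _ => Finset.subset_union_left, h.mono fun _ => Finset.subset_union_right]
end

section
/- Let T and S be monads on the category Type u of sets. A tensor product of T and S (an initial commuting cocone) exists if and only if the forgetful functor from the category TAlg(T,S) of (T,S)-tensor algebras to Type u has a left adjoint. -/
open CategoryTheory

universe u

/-- A `(T,S)`-tensor algebra: a set with Eilenberg–Moore algebra structures for both
monads, satisfying the tensor law. -/
structure TensorAlg (T S : Monad (Type u)) where
  carrier : Type u
  α : T.obj carrier → carrier
  β : S.obj carrier → carrier
  α_unit : ∀ x : carrier, α (T.η.app carrier x) = x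
  α_mul : ∀ m : T.obj (T.obj carrier), α (T.μ.app carrier m) = α (T.map (TypeCat.ofHom α) m)
  β_unit : ∀ x : carrier, β (S.η.app carrier x) = x
  β_mul : ∀ m : S.obj (S.obj carrier), β (S.μ.app carrier m) = β (S.map (TypeCat.ofHom β) m)
  tensor_law : ∀ {Y Z : Type u} (p : T.obj Y) (q : S.obj Z) (f : Y × Z → carrier),
    α (T.map (TypeCat.ofHom fun y => β (S.map (TypeCat.ofHom fun z => f (y, z)) q)) p) =
      β (S.map (TypeCat.ofHom fun z => α (T.map (TypeCat.ofHom fun y => f (y, z)) p)) q)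

/-- Morphisms of tensor algebras: maps homomorphic for both structures. -/
@[ext]
structure TensorAlgHom {T S : Monad (Type u)} (A B : TensorAlg T S) where
  toFun : A.carrier → B.carrier
  map_α : ∀ m : T.obj A.carrier, toFun (A.α m) = B.α (T.map (TypeCat.ofHom toFun) m)
  map_β : ∀ m : S.obj A.carrier, toFun (A.β m) = B.β (S.map (TypeCat.ofHom toFun) m)

instance TensorAlg.instCategory {T S : Monad (Type u)} : Category (TensorAlg T S) where
  Hom A B := TensorAlgHom A B
  id A :=
    { toFun := id
      map_α := fun m => by
        show A.α m = A.α (T.map (𝟙 A.carrier) m)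
        rw [FunctorToTypes.map_id_apply]
      map_β := fun m => by
        show A.β m = A.β (S.map (𝟙 A.carrier) m)
        rw [FunctorToTypes.map_id_apply] }
  comp {A B C} f g :=
    { toFun := g.toFun ∘ f.toFun
      map_α := fun m => by
        show g.toFun (f.toFun (A.α m)) = C.α (T.map (TypeCat.ofHom (g.toFun ∘ f.toFun)) m)
        rw [f.map_α, g.map_α]
        congr 1
        exact (FunctorToTypes.map_comp_apply T.toFunctor (TypeCat.ofHom f.toFun) (TypeCat.ofHom g.toFun) m).symm
      map_β := fun m => by
        show g.toFun (f.toFun (A.β m)) = C.β (S.map (TypeCat.ofHom (g.toFun ∘ f.toFun)) m)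
        rw [f.map_β, g.map_β]
        congr 1
        exact (FunctorToTypes.map_comp_apply S.toFunctor (TypeCat.ofHom f.toFun) (TypeCat.ofHom g.toFun) m).symm }
  id_comp f := by apply TensorAlgHom.ext; rfl
  comp_id f := by apply TensorAlgHom.ext; rfl
  assoc f g h := by apply TensorAlgHom.ext; rfl

/-- The forgetful functor from `(T,S)`-tensor algebras to sets. -/
def forgetTAlg (T S : Monad (Type u)) : TensorAlg T S ⥤ Type u where
  obj A := A.carrier
  map f := TypeCat.ofHom (TensorAlgHom.toFun f)
  map_id _ := rfl
  map_comp _ _ := rfl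

/-- A commuting cocone over monads `T` and `S`: a monad `R` with monad morphisms from
`T` and `S` such that the images of any `T`-program and any `S`-program commute. -/
structure CommutingCocone (T S : Monad (Type u)) where
  R : Monad (Type u)
  τ : T ⟶ R
  σ : S ⟶ R
  commutes : ∀ {X Y : Type u} (p : T.obj X) (q : S.obj Y),
    R.μ.app (X × Y) (R.map (TypeCat.ofHom fun x => R.map (TypeCat.ofHom fun y => (x, y)) (σ.app Y q)) (τ.app X p)) =
      R.μ.app (X × Y) (R.map (TypeCat.ofHom fun y => R.map (TypeCat.ofHom fun x => (x, y)) (τ.app X p)) (σ.app Y q))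

/-- A tensor product of `T` and `S` is an initial commuting cocone. -/
def IsMonadTensorProduct {T S : Monad (Type u)} (c : CommutingCocone T S) : Prop :=
  ∀ c' : CommutingCocone T S, ∃! h : c.R ⟶ c'.R, c.τ ≫ h = c'.τ ∧ c.σ ≫ h = c'.σ


/-!
A `(T,S)`-tensor algebra structure on a set `A` is the same thing as a commuting cocone on
the continuation monad `(· → A) → A`, and a map of tensor algebras `g : A → B` is the same
thing as a commuting cocone on the submonad of `g`-compatible pairs in
`((· → A) → A) × ((· → B) → B)`. So if `(R, τ, σ)` is initial, every tensor algebra carries an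
`R`-algebra structure restricting to its two structures, and every map of tensor algebras is a
map of `R`-algebras: restriction along `τ` and `σ` is an equivalence between `R`-algebras and
tensor algebras over sets, and free `R`-algebras are free tensor algebras.

Conversely, given `F ⊣ U`, the structure maps of the tensor algebras `F X` make `U ∘ F` a
commuting cocone with `τ_X = α ∘ T η_X` and `σ_X = β ∘ S η_X`. For any commuting cocone `R'`,
the free `R'`-algebra on `X` restricts to a tensor algebra, and transposing `η' : X → R' X` along
the adjunction yields the unique mediating monad morphism.
-/

namespace CategoryTheory

namespace Monad

variable {M : Monad (Type u)}

lemma map_ofHom_comp_apply {X Y Z : Type u} (f : X → Y) (g : Y → Z) (x : M.obj X) :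
    M.map (↾fun a => g (f a)) x = M.map (↾g) (M.map (↾f) x) :=
  M.map_comp_apply (↾f) (↾g) x

lemma map_η_apply {X Y : Type u} (f : X ⟶ Y) (x : X) :
    M.map f (M.η.app X x) = M.η.app Y (f x) :=
  (NatTrans.naturality_apply M.η f x).symm

lemma map_μ_apply {X Y : Type u} (f : X ⟶ Y) (m : M.obj (M.obj X)) :
    M.map f (M.μ.app X m) = M.μ.app Y (M.map (M.map f) m) :=
  (NatTrans.naturality_apply M.μ f m).symm

lemma left_unit_apply {X : Type u} (m : M.obj X) : M.μ.app X (M.η.app (M.obj X) m) = m :=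
  types_congr_hom (M.left_unit X) m

lemma right_unit_apply {X : Type u} (m : M.obj X) : M.μ.app X (M.map (M.η.app X) m) = m :=
  types_congr_hom (M.right_unit X) m

namespace Algebra

lemma unit_apply (A : M.Algebra) (x : A.A) : A.a (M.η.app A.A x) = x :=
  types_congr_hom A.unit x

lemma assoc_apply (A : M.Algebra) (m : M.obj (M.obj A.A)) :
    A.a (M.μ.app A.A m) = A.a (M.map A.a m) :=
  types_congr_hom A.assoc m

lemma Hom.h_apply {A B : M.Algebra} (f : A ⟶ B) (m : M.obj A.A) :
    f.f (A.a m) = B.a (M.map f.f m) :=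
  (types_congr_hom f.h m).symm

lemma a_map_a_apply (A : M.Algebra) {Y Z : Type u} (m : M.obj Y) (g : Y → M.obj Z)
    (f : Z → A.A) :
    A.a (M.map (↾fun y => A.a (M.map (↾f) (g y))) m) =
      A.a (M.map (↾f) (M.μ.app Z (M.map (↾g) m))) := by
  rw [map_μ_apply, A.assoc_apply, ← M.map_comp_apply, ← M.map_comp_apply]
  rfl

end Algebra

end Monad

namespace MonadHom

variable {M N N' : Monad (Type u)}

lemma app_η_apply (φ : M ⟶ N) {X : Type u} (x : X) : φ.app X (M.η.app X x) = N.η.app X x :=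
  types_congr_hom (φ.app_η X) x

lemma app_μ_apply (φ : M ⟶ N) {X : Type u} (m : M.obj (M.obj X)) :
    φ.app X (M.μ.app X m) = N.μ.app X (φ.app (N.obj X) (M.map (φ.app X) m)) :=
  types_congr_hom (φ.app_μ X) m

lemma naturality_apply (φ : M ⟶ N) {X Y : Type u} (f : X ⟶ Y) (m : M.obj X) :
    φ.app Y (M.map f m) = N.map f (φ.app X m) :=
  NatTrans.naturality_apply φ.toNatTrans f m

lemma μ_app_map_η_apply (φ : M ⟶ N) {X : Type u} (p : M.obj X) :
    N.μ.app X (φ.app _ (M.map (N.η.app X) p)) = φ.app X p := by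
  rw [φ.naturality_apply, N.right_unit_apply]
  rfl

lemma app_μ_comp_apply (ψ : N ⟶ N') (φ : M ⟶ N) {X : Type u} (m : M.obj (N.obj X)) :
    ψ.app X (N.μ.app X (φ.app _ m)) = N'.μ.app X ((φ ≫ ψ).app _ (M.map (ψ.app X) m)) := by
  rw [ψ.app_μ_apply, ← φ.naturality_apply]
  rfl

end MonadHom

end CategoryTheory

def contMonad (A : Type u) : Monad (Type u) where
  obj X := (X → A) → A
  map f := ↾fun u k => u (fun x => k (f x))
  η := { app _ := ↾fun x k => k x }
  μ := { app _ := ↾fun m k => m (fun u => u k) }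

lemma contMonad.hom_app_μ_apply {M : Monad (Type u)} {A : Type u} (φ : M ⟶ contMonad A)
    {X : Type u} (m : M.obj (M.obj X)) (k : X → A) :
    φ.app X (M.μ.app X m) k = φ.app (M.obj X) m (fun p => φ.app X p k) := by
  rw [φ.app_μ_apply]
  exact congrFun (φ.naturality_apply (φ.app X) m) fun u => u k

def algebraOfContHom {M : Monad (Type u)} {A : Type u} (h : M ⟶ contMonad A) : M.Algebra where
  A := A
  a := ↾fun r => h.app A r id
  unit := by
    ext x
    exact congrFun (h.app_η_apply x) id
  assoc := by
    ext m
    exact (contMonad.hom_app_μ_apply h m id).trans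
      (congrFun (h.naturality_apply (↾fun r => h.app A r id) m) id).symm

namespace CategoryTheory.Monad.Algebra

variable {M : Monad (Type u)}

def toContHom (A : M.Algebra) : M ⟶ contMonad A.A where
  app X := ↾fun p k => A.a (M.map (↾k) p)
  naturality X Y f := by
    ext p
    funext k
    exact congrArg A.a (M.map_comp_apply f (↾k) p).symm
  app_η X := by
    ext x
    funext k
    show A.a (M.map (↾k) (M.η.app X x)) = k x
    rw [M.map_η_apply, A.unit_apply]
    rfl
  app_μ X := by
    ext m
    funext k
    show A.a (M.map (↾k) (M.μ.app X m)) =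
      A.a (M.map (↾fun u => u k) (M.map (↾fun p k' => A.a (M.map (↾k') p)) m))
    rw [M.map_μ_apply, A.assoc_apply, ← M.map_comp_apply, ← M.map_comp_apply]
    rfl

lemma toContHom_app_self (A : M.Algebra) (r : M.obj A.A) :
    A.toContHom.app A.A r (fun x => x) = A.a r :=
  congrArg A.a (M.map_id_apply A.A r)

lemma toContHom_algebraFunctorOfMonadHom {N : Monad (Type u)} (φ : N ⟶ M) (A : M.Algebra) :
    ((algebraFunctorOfMonadHom φ).obj A).toContHom = φ ≫ A.toContHom := by
  ext X p
  funext k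
  exact congrArg A.a (φ.naturality_apply (↾k) p)

lemma Hom.map_toContHom_app {A B : M.Algebra} (f : A ⟶ B) {X : Type u} (p : M.obj X)
    (k : X → A.A) : f.f (A.toContHom.app X p k) = B.toContHom.app X p (fun x => f.f (k x)) := by
  show f.f (A.a (M.map (↾k) p)) = B.a (M.map (↾fun x => f.f (k x)) p)
  rw [f.h_apply, ← M.map_comp_apply]
  rfl

end CategoryTheory.Monad.Algebra

section PairMonad

variable {A B : Type u}

def PairObj (g : A → B) (X : Type u) : Type u :=
  {uv : ((X → A) → A) × ((X → B) → B) //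
    ∀ k : X → A, g (uv.1 k) = uv.2 (fun x => g (k x))}

def pairMonad (g : A → B) : Monad (Type u) where
  obj X := PairObj g X
  map f := ↾fun uv => ⟨(fun k => uv.1.1 (fun x => k (f x)), fun k => uv.1.2 (fun x => k (f x))),
    fun k => uv.2 (fun x => k (f x))⟩
  η := { app X := ↾fun x => ⟨(fun k => k x, fun k => k x), fun _ => rfl⟩ }
  μ :=
    { app X := ↾fun m =>
        ⟨(fun k => m.1.1 (fun u => u.1.1 k), fun k => m.1.2 (fun u => u.1.2 k)),
          fun k => (m.2 fun u => u.1.1 k).trans (congrArg m.1.2 (funext fun u => u.2 k))⟩ }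

namespace pairMonad

def fst (g : A → B) : pairMonad g ⟶ contMonad A where
  app X := ↾fun uv => uv.1.1

def snd (g : A → B) : pairMonad g ⟶ contMonad B where
  app X := ↾fun uv => uv.1.2

variable {g : A → B} {M : Monad (Type u)} (φ : M ⟶ contMonad A) (ψ : M ⟶ contMonad B)
  (h : ∀ {X} (p : M.obj X) (k : X → A), g (φ.app X p k) = ψ.app X p (fun x => g (k x)))

def liftApp (X : Type u) (p : M.obj X) : PairObj g X := ⟨(φ.app X p, ψ.app X p), h p⟩

def lift : M ⟶ pairMonad g where
  app X := ↾liftApp φ ψ h X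
  naturality X Y f := by
    ext p
    exact Subtype.ext (Prod.ext (φ.naturality_apply f p) (ψ.naturality_apply f p))
  app_η X := by
    ext x
    exact Subtype.ext (Prod.ext (φ.app_η_apply x) (ψ.app_η_apply x))
  app_μ X := by
    ext m
    refine Subtype.ext (Prod.ext (funext fun k => ?_) (funext fun k => ?_))
    · exact (contMonad.hom_app_μ_apply φ m k).trans
        (congrFun (φ.naturality_apply (↾liftApp φ ψ h X) m) fun u => u.1.1 k).symm
    · exact (contMonad.hom_app_μ_apply ψ m k).trans
        (congrFun (ψ.naturality_apply (↾liftApp φ ψ h X) m) fun u => u.1.2 k).symm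

end pairMonad

end PairMonad

section

variable {T S : Monad (Type u)}

namespace TensorAlg

variable (T S)

def leftAlgebra : TensorAlg T S ⥤ T.Algebra where
  obj B :=
    { A := B.carrier
      a := ↾B.α
      unit := by ext x; exact B.α_unit x
      assoc := by ext m; exact B.α_mul m }
  map g := { f := ↾g.toFun, h := by ext m; exact (g.map_α m).symm }

def rightAlgebra : TensorAlg T S ⥤ S.Algebra where
  obj B :=
    { A := B.carrier
      a := ↾B.β
      unit := by ext x; exact B.β_unit x
      assoc := by ext m; exact B.β_mul m }
  map g := { f := ↾g.toFun, h := by ext m; exact (g.map_β m).symm }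

variable {T S}

def contCocone (B : TensorAlg T S) : CommutingCocone T S where
  R := contMonad B.carrier
  τ := ((leftAlgebra T S).obj B).toContHom
  σ := ((rightAlgebra T S).obj B).toContHom
  commutes p q := funext (B.tensor_law p q)

end TensorAlg

def TensorAlgHom.pairCocone {A B : TensorAlg T S} (g : A ⟶ B) : CommutingCocone T S where
  R := pairMonad g.toFun
  τ := pairMonad.lift _ _ ((TensorAlg.leftAlgebra T S).map g).map_toContHom_app
  σ := pairMonad.lift _ _ ((TensorAlg.rightAlgebra T S).map g).map_toContHom_app
  commutes p q := Subtype.ext (Prod.ext (A.contCocone.commutes p q) (B.contCocone.commutes p q))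

namespace CommutingCocone

lemma algebra_tensor_law (c : CommutingCocone T S) (A : c.R.Algebra) {Y Z : Type u}
    (p : T.obj Y) (q : S.obj Z) (f : Y × Z → A.A) :
    A.a (c.τ.app _ (T.map (↾fun y => A.a (c.σ.app _ (S.map (↾fun z => f (y, z)) q))) p)) =
      A.a (c.σ.app _ (S.map (↾fun z => A.a (c.τ.app _ (T.map (↾fun y => f (y, z)) p))) q)) := by
  simp only [MonadHom.naturality_apply, Monad.map_ofHom_comp_apply (fun z => (_, z)) f,
    Monad.map_ofHom_comp_apply (fun y => (y, _)) f]
  rw [A.a_map_a_apply, A.a_map_a_apply, c.commutes]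

def restrict (c : CommutingCocone T S) : c.R.Algebra ⥤ TensorAlg T S where
  obj A :=
    { carrier := A.A
      α := ((Monad.algebraFunctorOfMonadHom c.τ).obj A).a
      β := ((Monad.algebraFunctorOfMonadHom c.σ).obj A).a
      α_unit := ((Monad.algebraFunctorOfMonadHom c.τ).obj A).unit_apply
      α_mul := ((Monad.algebraFunctorOfMonadHom c.τ).obj A).assoc_apply
      β_unit := ((Monad.algebraFunctorOfMonadHom c.σ).obj A).unit_apply
      β_mul := ((Monad.algebraFunctorOfMonadHom c.σ).obj A).assoc_apply
      tensor_law := c.algebra_tensor_law A }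
  map f :=
    { toFun := f.f
      map_α := ((Monad.algebraFunctorOfMonadHom c.τ).map f).h_apply
      map_β := ((Monad.algebraFunctorOfMonadHom c.σ).map f).h_apply }

end CommutingCocone

namespace IsMonadTensorProduct

variable {c : CommutingCocone T S}

/- `k ≫ fst` and `A.toContHom` are both maps of cocones from `c` to the continuation cocone of
`A`, hence equal; likewise for `snd`. The compatibility condition of `pairMonad` then says that
`g` commutes with the `R`-structures. -/
lemma toFun_a_apply (hc : IsMonadTensorProduct c) {A B : c.R.Algebra}
    (g : c.restrict.obj A ⟶ c.restrict.obj B) (r : c.R.obj A.A) :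
    g.toFun (A.a r) = B.a (c.R.map (↾g.toFun) r) := by
  obtain ⟨k, hkτ, hkσ⟩ := (hc g.pairCocone).exists
  have hfst : k ≫ pairMonad.fst g.toFun = A.toContHom :=
    (hc (c.restrict.obj A).contCocone).unique
      ⟨(congrArg (· ≫ pairMonad.fst g.toFun) hkτ :),
        (congrArg (· ≫ pairMonad.fst g.toFun) hkσ :)⟩
      ⟨(A.toContHom_algebraFunctorOfMonadHom c.τ).symm,
        (A.toContHom_algebraFunctorOfMonadHom c.σ).symm⟩
  have hsnd : k ≫ pairMonad.snd g.toFun = B.toContHom :=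
    (hc (c.restrict.obj B).contCocone).unique
      ⟨(congrArg (· ≫ pairMonad.snd g.toFun) hkτ :),
        (congrArg (· ≫ pairMonad.snd g.toFun) hkσ :)⟩
      ⟨(B.toContHom_algebraFunctorOfMonadHom c.τ).symm,
        (B.toContHom_algebraFunctorOfMonadHom c.σ).symm⟩
  have hA : (k.app A.A r).1.1 = A.toContHom.app A.A r := by rw [← hfst]; rfl
  have hB : (k.app A.A r).1.2 = B.toContHom.app A.A r := by rw [← hsnd]; rfl
  have hcompat := (k.app A.A r).2 fun x => x
  rw [hA, hB, A.toContHom_app_self] at hcompat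
  exact hcompat

noncomputable def liftAlgebra (hc : IsMonadTensorProduct c) (B : TensorAlg T S) : c.R.Algebra :=
  algebraOfContHom (hc B.contCocone).exists.choose

lemma restrict_obj_liftAlgebra (hc : IsMonadTensorProduct c) (B : TensorAlg T S) :
    c.restrict.obj (hc.liftAlgebra B) = B := by
  obtain ⟨hτ, hσ⟩ := (hc B.contCocone).exists.choose_spec
  have hα (p : T.obj B.carrier) : (hc.liftAlgebra B).a (c.τ.app _ p) = B.α p :=
    (congrFun (types_congr_hom (congrArg (fun φ => φ.app B.carrier) hτ) p) fun x => x).trans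
      (((TensorAlg.leftAlgebra T S).obj B).toContHom_app_self p)
  have hβ (q : S.obj B.carrier) : (hc.liftAlgebra B).a (c.σ.app _ q) = B.β q :=
    (congrFun (types_congr_hom (congrArg (fun φ => φ.app B.carrier) hσ) q) fun x => x).trans
      (((TensorAlg.rightAlgebra T S).obj B).toContHom_app_self q)
  revert hα hβ
  cases B
  intro hα hβ
  dsimp only [CommutingCocone.restrict]
  congr 1
  · exact funext hα
  · exact funext hβ

lemma isEquivalence_restrict (hc : IsMonadTensorProduct c) : c.restrict.IsEquivalence where
  faithful := Functor.Faithful.of_comp_eq (G := forgetTAlg T S) (H := c.R.forget) rfl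
  full := ⟨fun g => ⟨⟨↾g.toFun, by ext r; exact (hc.toFun_a_apply g r).symm⟩, rfl⟩⟩
  essSurj := ⟨fun B => ⟨hc.liftAlgebra B, ⟨eqToIso (hc.restrict_obj_liftAlgebra B)⟩⟩⟩

lemma isRightAdjoint_forgetTAlg (hc : IsMonadTensorProduct c) : (forgetTAlg T S).IsRightAdjoint :=
  have := hc.isEquivalence_restrict
  (Functor.isRightAdjoint_comp_iff_right c.restrict (forgetTAlg T S)).1
    (inferInstanceAs c.R.forget.IsRightAdjoint)

end IsMonadTensorProduct

namespace CategoryTheory.Adjunction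

variable {C : Type*} [Category C] {M : Monad (Type u)} (E : C ⥤ M.Algebra) {F : Type u ⥤ C}
  (adj : F ⊣ E ⋙ M.forget)

/-- `adj.unit.app X`, with its codomain written as the carrier of `E.obj (F.obj X)` rather than
`(F ⋙ E ⋙ M.forget).obj X`, so that rewriting with algebra laws sees matching types. -/
def liftUnit (X : Type u) : X ⟶ (E.obj (F.obj X)).A := adj.unit.app X

lemma liftUnit_naturality {X Y : Type u} (f : X ⟶ Y) :
    f ≫ adj.liftUnit E Y = adj.liftUnit E X ≫ (E.map (F.map f)).f :=
  (adj.unit_naturality f).symm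

lemma counit_a_liftUnit_apply (B : C) (m : M.obj (E.obj B).A) :
    (E.map (adj.counit.app B)).f ((E.obj (F.obj (E.obj B).A)).a (M.map (adj.liftUnit E _) m)) =
      (E.obj B).a m :=
  calc _ = (E.obj B).a (M.map (E.map (adj.counit.app B)).f (M.map (adj.liftUnit E _) m)) :=
        (E.map (adj.counit.app B)).h_apply _
    _ = (E.obj B).a (M.map (adj.liftUnit E _ ≫ (E.map (adj.counit.app B)).f) m) :=
        congrArg _ (M.map_comp_apply _ _ m).symm
    _ = (E.obj B).a (M.map (𝟙 _) m) :=
        congrArg (fun g => (E.obj B).a (M.map g m)) (adj.right_triangle_components B)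
    _ = (E.obj B).a m := congrArg _ (M.map_id_apply _ m)

def monadHomOfLift : M ⟶ adj.toMonad where
  app X := M.map (adj.liftUnit E X) ≫ (E.obj (F.obj X)).a
  naturality X Y f := by
    ext p
    show (E.obj (F.obj Y)).a (M.map (adj.liftUnit E Y) (M.map f p)) =
      (E.map (F.map f)).f ((E.obj (F.obj X)).a (M.map (adj.liftUnit E X) p))
    rw [Monad.Algebra.Hom.h_apply, ← M.map_comp_apply, ← M.map_comp_apply, liftUnit_naturality]
  app_η X := by
    ext x
    show (E.obj (F.obj X)).a (M.map (adj.liftUnit E X) (M.η.app X x)) = adj.liftUnit E X x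
    rw [M.map_η_apply, Monad.Algebra.unit_apply]
  app_μ X := by
    ext m
    show (E.obj (F.obj X)).a (M.map (adj.liftUnit E X) (M.μ.app X m)) =
      (E.map (adj.counit.app (F.obj X))).f ((E.obj (F.obj (E.obj (F.obj X)).A)).a
        (M.map (adj.liftUnit E _) (M.map (M.map (adj.liftUnit E X) ≫ (E.obj (F.obj X)).a) m)))
    rw [counit_a_liftUnit_apply, M.map_μ_apply, Monad.Algebra.assoc_apply, ← M.map_comp_apply]

lemma map_monadHomOfLift_app_apply {X : Type u} {B : C} (k : F.obj X ⟶ B) (p : M.obj X) :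
    (E.map k).f ((adj.monadHomOfLift E).app X p) =
      (E.obj B).a (M.map (adj.liftUnit E X ≫ (E.map k).f) p) :=
  ((E.map k).h_apply _).trans (congrArg _ (M.map_comp_apply _ _ p).symm)

lemma μ_map_monadHomOfLift_app_apply {X W : Type u} (g : X ⟶ adj.toMonad.obj W) (p : M.obj X) :
    adj.toMonad.μ.app W (adj.toMonad.map g ((adj.monadHomOfLift E).app X p)) =
      (E.obj (F.obj W)).a (M.map g p) := by
  show (E.map (adj.counit.app (F.obj W))).f
    ((E.map (F.map g)).f ((adj.monadHomOfLift E).app X p)) = _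
  rw [map_monadHomOfLift_app_apply, ← liftUnit_naturality, M.map_comp_apply]
  exact adj.counit_a_liftUnit_apply E (F.obj W) (M.map g p)

lemma a_eq_μ_monadHomOfLift_app_apply {X : Type u} (m : M.obj (adj.toMonad.obj X)) :
    (E.obj (F.obj X)).a m = adj.toMonad.μ.app X ((adj.monadHomOfLift E).app _ m) := by
  have := adj.μ_map_monadHomOfLift_app_apply E (𝟙 _) m
  rw [Functor.map_id_apply, Functor.map_id_apply] at this
  exact this.symm

end CategoryTheory.Adjunction

def tensorCoconeOfAdjunction {F : Type u ⥤ TensorAlg T S} (adj : F ⊣ forgetTAlg T S) :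
    CommutingCocone T S where
  R := adj.toMonad
  τ := adj.monadHomOfLift (TensorAlg.leftAlgebra T S)
  σ := adj.monadHomOfLift (TensorAlg.rightAlgebra T S)
  commutes {X Y} p q := by
    have hσ (x : X) : adj.toMonad.map (↾fun y => (x, y))
        ((adj.monadHomOfLift (TensorAlg.rightAlgebra T S)).app Y q) =
          (F.obj (X × Y)).β (S.map (↾fun y => adj.unit.app (X × Y) (x, y)) q) :=
      (MonadHom.naturality_apply _ (↾fun y => (x, y)) q).symm.trans
        (congrArg (F.obj (X × Y)).β (S.map_comp_apply _ _ q).symm)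
    have hτ (y : Y) : adj.toMonad.map (↾fun x => (x, y))
        ((adj.monadHomOfLift (TensorAlg.leftAlgebra T S)).app X p) =
          (F.obj (X × Y)).α (T.map (↾fun x => adj.unit.app (X × Y) (x, y)) p) :=
      (MonadHom.naturality_apply _ (↾fun x => (x, y)) p).symm.trans
        (congrArg (F.obj (X × Y)).α (T.map_comp_apply _ _ p).symm)
    exact (adj.μ_map_monadHomOfLift_app_apply (TensorAlg.leftAlgebra T S) _ p).trans <|
      (congrArg (fun g => (F.obj (X × Y)).α (T.map (↾g) p)) (funext hσ)).trans <|
        ((F.obj (X × Y)).tensor_law p q (adj.unit.app (X × Y))).trans <|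
          (congrArg (fun g => (F.obj (X × Y)).β (S.map (↾g) q)) (funext hτ)).symm.trans
            (adj.μ_map_monadHomOfLift_app_apply (TensorAlg.rightAlgebra T S) _ q).symm

namespace tensorCoconeOfAdjunction

variable {F : Type u ⥤ TensorAlg T S} (adj : F ⊣ forgetTAlg T S) (c : CommutingCocone T S)

lemma hom_ext_of_unit {X : Type u} {B : TensorAlg T S} {g₁ g₂ : F.obj X ⟶ B}
    (h : ∀ x, g₁.toFun (adj.unit.app X x) = g₂.toFun (adj.unit.app X x)) : g₁ = g₂ :=
  (adj.homEquiv X B).injective (ConcreteCategory.hom_ext _ _ h)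

lemma unit_naturality_apply {X Y : Type u} (f : X ⟶ Y) (x : X) :
    (F.map f).toFun (adj.unit.app X x) = adj.unit.app Y (f x) :=
  (types_congr_hom (adj.unit.naturality f) x).symm

lemma counit_unit_apply (B : TensorAlg T S) (y : B.carrier) :
    (adj.counit.app B).toFun (adj.unit.app ((forgetTAlg T S).obj B) y) = y :=
  types_congr_hom (adj.right_triangle_components B) y

noncomputable def descApp (X : Type u) : F.obj X ⟶ c.restrict.obj ((Monad.free c.R).obj X) :=
  (adj.homEquiv _ _).symm (c.R.η.app X)

lemma unit_comp_descApp (X : Type u) :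
    adj.unit.app X ≫ (forgetTAlg T S).map (descApp adj c X) = c.R.η.app X :=
  (adj.homEquiv_unit _ _ _).symm.trans ((adj.homEquiv _ _).apply_symm_apply _)

lemma descApp_unit_apply (X : Type u) (x : X) :
    (descApp adj c X).toFun (adj.unit.app X x) = c.R.η.app X x :=
  types_congr_hom (unit_comp_descApp adj c X) x

lemma descApp_naturality {X Y : Type u} (f : X ⟶ Y) :
    F.map f ≫ descApp adj c Y = descApp adj c X ≫ c.restrict.map ((Monad.free c.R).map f) :=
  (adj.homEquiv_naturality_left_symm (Y := c.restrict.obj ((Monad.free c.R).obj Y)) f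
      (c.R.η.app Y)).symm.trans <|
    (congrArg (adj.homEquiv _ _).symm (c.R.η.naturality f)).trans
      (adj.homEquiv_naturality_right_symm (c.R.η.app X) (c.restrict.map ((Monad.free c.R).map f)))

def μHom (X : Type u) : (Monad.free c.R).obj (c.R.obj X) ⟶ (Monad.free c.R).obj X where
  f := c.R.μ.app X
  h := c.R.assoc X

lemma counit_comp_descApp (X : Type u) :
    adj.counit.app (F.obj X) ≫ descApp adj c X =
      F.map ((forgetTAlg T S).map (descApp adj c X)) ≫ descApp adj c (c.R.obj X) ≫
        c.restrict.map (μHom c X) := by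
  refine hom_ext_of_unit adj fun x => ?_
  show (descApp adj c X).toFun ((adj.counit.app (F.obj X)).toFun (adj.unit.app _ x)) =
    c.R.μ.app X ((descApp adj c (c.R.obj X)).toFun
      ((F.map ((forgetTAlg T S).map (descApp adj c X))).toFun (adj.unit.app _ x)))
  erw [counit_unit_apply, unit_naturality_apply, descApp_unit_apply, c.R.left_unit_apply]
  rfl

noncomputable def desc : adj.toMonad ⟶ c.R where
  app X := (forgetTAlg T S).map (descApp adj c X)
  naturality _ _ f := congrArg (forgetTAlg T S).map (descApp_naturality adj c f)
  app_η X := unit_comp_descApp adj c X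
  app_μ X := congrArg (forgetTAlg T S).map (counit_comp_descApp adj c X)

lemma τ_comp_desc : (tensorCoconeOfAdjunction adj).τ ≫ desc adj c = c.τ := by
  ext X p
  refine (adj.map_monadHomOfLift_app_apply (TensorAlg.leftAlgebra T S)
    (descApp adj c X) p).trans ?_
  erw [unit_comp_descApp]
  exact c.τ.μ_app_map_η_apply p

lemma σ_comp_desc : (tensorCoconeOfAdjunction adj).σ ≫ desc adj c = c.σ := by
  ext X q
  refine (adj.map_monadHomOfLift_app_apply (TensorAlg.rightAlgebra T S)
    (descApp adj c X) q).trans ?_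
  erw [unit_comp_descApp]
  exact c.σ.μ_app_map_η_apply q

lemma eq_desc (h : adj.toMonad ⟶ c.R) (hτ : (tensorCoconeOfAdjunction adj).τ ≫ h = c.τ)
    (hσ : (tensorCoconeOfAdjunction adj).σ ≫ h = c.σ) : h = desc adj c := by
  ext X : 2
  let k : F.obj X ⟶ c.restrict.obj ((Monad.free c.R).obj X) :=
    { toFun := h.app X
      map_α m := (congrArg (h.app X)
        (adj.a_eq_μ_monadHomOfLift_app_apply (TensorAlg.leftAlgebra T S) m)).trans
          ((h.app_μ_comp_apply _ m :).trans
            (congrArg (fun φ : T ⟶ c.R => c.R.μ.app X (φ.app _ (T.map (h.app X) m))) hτ))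
      map_β m := (congrArg (h.app X)
        (adj.a_eq_μ_monadHomOfLift_app_apply (TensorAlg.rightAlgebra T S) m)).trans
          ((h.app_μ_comp_apply _ m :).trans
            (congrArg (fun φ : S ⟶ c.R => c.R.μ.app X (φ.app _ (S.map (h.app X) m))) hσ)) }
  have hk : k = descApp adj c X :=
    hom_ext_of_unit adj fun x => (h.app_η_apply x).trans (descApp_unit_apply adj c X x).symm
  exact congrArg (forgetTAlg T S).map hk

end tensorCoconeOfAdjunction

lemma isMonadTensorProduct_tensorCoconeOfAdjunction {F : Type u ⥤ TensorAlg T S}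
    (adj : F ⊣ forgetTAlg T S) : IsMonadTensorProduct (tensorCoconeOfAdjunction adj) := fun c =>
  ⟨tensorCoconeOfAdjunction.desc adj c,
    ⟨tensorCoconeOfAdjunction.τ_comp_desc adj c, tensorCoconeOfAdjunction.σ_comp_desc adj c⟩,
    fun h hh => tensorCoconeOfAdjunction.eq_desc adj c h hh.1 hh.2⟩

end

/-- Theorem 3.6: the tensor product of `T` and `S` exists iff the forgetful functor
from `(T,S)`-tensor algebras to sets has a left adjoint. -/
theorem isMonadTensorProduct_exists_iff_hasLeftAdjoint (T S : Monad (Type u)) :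
    (∃ c : CommutingCocone T S, IsMonadTensorProduct c) ↔
      ∃ F : Type u ⥤ TensorAlg T S, Nonempty (F ⊣ forgetTAlg T S) := by
  constructor
  · rintro ⟨c, hc⟩
    exact hc.isRightAdjoint_forgetTAlg.exists_leftAdjoint
  · rintro ⟨F, ⟨adj⟩⟩
    exact ⟨tensorCoconeOfAdjunction adj, isMonadTensorProduct_tensorCoconeOfAdjunction adj⟩
end

section
/- Let κ be a regular uncountable cardinal, T a monad on the category Type u of sets, and (A, α, β) a (P*κ, T)-tensor algebra (with β the P*κ-structure and α the T-structure) that is generated by a subset X̂ ⊆ A. Then for every x ∈ A there exists t ∈ T``X̂ with t ≤ x. -/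
open CategoryTheory

universe u

/-- Underlying object map of the non-empty `κ`-bounded powerset monad. -/
def PstarObj (κ : Cardinal.{u}) (X : Type u) : Type u :=
  {s : Set X // s.Nonempty ∧ Cardinal.mk s < κ}

namespace PstarObj

variable {κ : Cardinal.{u}}

/-- Direct image. -/
def fmap {X Y : Type u} (f : X → Y) (s : PstarObj κ X) : PstarObj κ Y :=
  ⟨f '' s.1, s.2.1.image f, Cardinal.mk_image_le.trans_lt s.2.2⟩

@[simp] theorem fmap_coe {X Y : Type u} (f : X → Y) (s : PstarObj κ X) :
    (fmap f s).1 = f '' s.1 := rfl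

/-- Unit: singletons. -/
def eta (hκ : κ.IsRegular) {X : Type u} (x : X) : PstarObj κ X :=
  ⟨{x}, Set.singleton_nonempty x, by
    rw [Cardinal.mk_singleton]
    exact lt_of_lt_of_le Cardinal.one_lt_aleph0 hκ.aleph0_le⟩

@[simp] theorem eta_coe (hκ : κ.IsRegular) {X : Type u} (x : X) :
    (eta hκ x : PstarObj κ X).1 = {x} := rfl

/-- Multiplication: union. -/
def mu (hκ : κ.IsRegular) {X : Type u} (S : PstarObj κ (PstarObj κ X)) : PstarObj κ X :=
  ⟨⋃ t ∈ S.1, t.1,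
    (S.2.1).elim fun t ht => (t.2.1).elim fun x hx => ⟨x, Set.mem_biUnion ht hx⟩,
    (Cardinal.card_biUnion_lt_iff_forall_of_isRegular hκ S.2.2).mpr fun t _ => t.2.2⟩

@[simp] theorem mu_coe (hκ : κ.IsRegular) {X : Type u} (S : PstarObj κ (PstarObj κ X)) :
    (mu hκ S).1 = ⋃ t ∈ S.1, t.1 := rfl

end PstarObj

/-- The non-empty `κ`-bounded powerset monad `P*κ`: it sends a set `X` to the set of
non-empty subsets of `X` of cardinality `< κ`, acts by direct image, has unit
`x ↦ {x}` and multiplication given by union. -/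
def Pstar (κ : Cardinal.{u}) (hκ : κ.IsRegular) : Monad (Type u) where
  obj X := PstarObj κ X
  map f := TypeCat.ofHom (PstarObj.fmap f)
  map_id X := by
    ext s
    apply Subtype.ext
    simp [PstarObj.fmap]
  map_comp {X Y Z} f g := by
    ext s
    apply Subtype.ext
    show ((f ≫ g) '' s.1 : Set Z) = g '' (f '' s.1)
    simp [Set.image_image]
  η :=
    { app := fun X => TypeCat.ofHom fun x => PstarObj.eta hκ x
      naturality := fun X Y f => by
        ext x
        apply Subtype.ext
        show ({f x} : Set Y) = f '' {x}
        simp }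
  μ :=
    { app := fun X => TypeCat.ofHom fun S => PstarObj.mu hκ S
      naturality := fun X Y f => by
        ext S
        apply Subtype.ext
        show (⋃ t ∈ (PstarObj.fmap (PstarObj.fmap f) S).1, t.1 : Set Y)
          = f '' (⋃ t ∈ S.1, t.1)
        ext y
        simp only [PstarObj.fmap_coe, Set.mem_iUnion, Set.mem_image]
        constructor
        · rintro ⟨t, ⟨⟨u, hu, rfl⟩, hy⟩⟩
          simp only [PstarObj.fmap_coe, Set.mem_image] at hy
          obtain ⟨x, hx, rfl⟩ := hy
          exact ⟨x, ⟨u, hu, hx⟩, rfl⟩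
        · rintro ⟨x, ⟨⟨u, hu, hx⟩, rfl⟩⟩
          exact ⟨PstarObj.fmap f u, ⟨⟨u, hu, rfl⟩, by
            simp only [PstarObj.fmap_coe]
            exact ⟨x, hx, rfl⟩⟩⟩ }
  left_unit X := by
    ext S
    apply Subtype.ext
    show (⋃ t ∈ (PstarObj.eta hκ S).1, t.1 : Set X) = S.1
    simp
  right_unit X := by
    ext S
    apply Subtype.ext
    show (⋃ t ∈ (PstarObj.fmap (PstarObj.eta hκ) S).1, t.1 : Set X) = S.1
    ext y
    simp
  assoc X := by
    ext SS
    apply Subtype.ext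
    show (⋃ t ∈ (PstarObj.fmap (PstarObj.mu hκ) SS).1, t.1 : Set X)
      = ⋃ t ∈ (PstarObj.mu hκ SS).1, t.1
    ext y
    simp only [PstarObj.fmap_coe, PstarObj.mu_coe, Set.mem_iUnion, Set.mem_image]
    constructor
    · rintro ⟨t, ⟨⟨U, hU, rfl⟩, hy⟩⟩
      simp only [PstarObj.mu_coe, Set.mem_iUnion] at hy
      obtain ⟨u, hu, hy⟩ := hy
      exact ⟨u, ⟨⟨U, hU, hu⟩, hy⟩⟩
    · rintro ⟨u, ⟨⟨U, hU, hu⟩, hy⟩⟩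
      exact ⟨PstarObj.mu hκ U, ⟨⟨U, hU, rfl⟩, by
        simp only [PstarObj.mu_coe, Set.mem_iUnion]
        exact ⟨u, hu, hy⟩⟩⟩

/-- A subset of the carrier of a tensor algebra is closed if it is closed under both
algebra structures. -/
def TensorAlg.Closed {T S : Monad (Type u)} (A : TensorAlg T S) (s : Set A.carrier) : Prop :=
  (∀ m : T.obj s, A.α (T.map (TypeCat.ofHom (Subtype.val : s → A.carrier)) m) ∈ s) ∧
    (∀ m : S.obj s, A.β (S.map (TypeCat.ofHom (Subtype.val : s → A.carrier)) m) ∈ s)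

/-- A tensor algebra is generated by `X` if the only closed subset containing `X` is
the whole carrier. -/
def TensorAlg.GeneratedBy {T S : Monad (Type u)} (A : TensorAlg T S)
    (X : Set A.carrier) : Prop :=
  ∀ s : Set A.carrier, A.Closed s → X ⊆ s → s = Set.univ

/-- `T``Y`: the least subset of the carrier containing `Y` and closed under the
`T`-algebra structure `α`. -/
def TensorAlg.TClosure {T S : Monad (Type u)} (A : TensorAlg T S)
    (Y : Set A.carrier) : Set A.carrier :=
  ⋂₀ {s : Set A.carrier |
    Y ⊆ s ∧ ∀ m : T.obj s, A.α (T.map (TypeCat.ofHom (Subtype.val : s → A.carrier)) m) ∈ s}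

/-- The unordered pair `{x, y}` as an element of `P*κ`. -/
def pairEl {κ : Cardinal.{u}} (hκ : κ.IsRegular) {A : Type u} (x y : A) : PstarObj κ A :=
  ⟨{x, y}, ⟨x, Set.mem_insert x {y}⟩, by
    have hfin : Finite (↥({x, y} : Set A)) :=
      ((Set.finite_singleton y).insert x).to_subtype
    exact lt_of_lt_of_le (Cardinal.lt_aleph0_of_finite _) hκ.aleph0_le⟩

/-- The semilattice order induced by the `P*κ`-algebra structure `β` of a
`(T, P*κ)`-tensor algebra: `x ≤ y` iff `x ∨ y = y`, where `x ∨ y = β {x, y}`. -/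
def TensorAlg.le {κ : Cardinal.{u}} {hκ : κ.IsRegular} {T : Monad (Type u)}
    (A : TensorAlg T (Pstar κ hκ)) (x y : A.carrier) : Prop :=
  A.β (pairEl hκ x y) = y

/-- `P``Y = {β s | s ⊆ Y nonempty of cardinality < κ}`. -/
def TensorAlg.PImage {κ : Cardinal.{u}} {hκ : κ.IsRegular} {T : Monad (Type u)}
    (A : TensorAlg T (Pstar κ hκ)) (Y : Set A.carrier) : Set A.carrier :=
  {a | ∃ s : PstarObj κ A.carrier, s.1 ⊆ Y ∧ A.β s = a}

/-! The elements lying above some element of `T``X̂` form a subset containing `X̂` that is closed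
under `β` (a join lies above each of its members) and under `α`, because the tensor law with
`P*κ` makes `α` monotone in each argument. Since `X̂` generates `A`, this subset is everything. -/

theorem map_ofHom_comp (F : Monad (Type u)) {X Y Z : Type u} (f : X → Y) (g : Y → Z)
    (p : F.obj X) :
    F.map (TypeCat.ofHom (g ∘ f)) p = F.map (TypeCat.ofHom g) (F.map (TypeCat.ofHom f) p) :=
  ConcreteCategory.congr_hom (F.map_comp (TypeCat.ofHom f) (TypeCat.ofHom g)) p

@[simp] theorem coe_pairEl {κ : Cardinal.{u}} (hκ : κ.IsRegular) {X : Type u} (x y : X) :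
    (pairEl hκ x y : PstarObj κ X).1 = {x, y} := rfl

theorem map_pairEl {κ : Cardinal.{u}} {hκ : κ.IsRegular} {X Y : Type u} (f : X → Y) (x y : X) :
    (Pstar κ hκ).map (TypeCat.ofHom f) (pairEl hκ x y) = pairEl hκ (f x) (f y) :=
  Subtype.ext (Set.image_pair f x y)

namespace TensorAlg

section

variable {T S : Monad (Type u)} (A : TensorAlg T S)

theorem subset_tClosure (X : Set A.carrier) : X ⊆ A.TClosure X :=
  fun _ hx => Set.mem_sInter.2 fun _ hs => hs.1 hx

theorem α_map_mem_tClosure {X : Set A.carrier} {Y : Type u} (f : Y → A.carrier)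
    (hf : ∀ y, f y ∈ A.TClosure X) (p : T.obj Y) :
    A.α (T.map (TypeCat.ofHom f) p) ∈ A.TClosure X := by
  refine Set.mem_sInter.2 fun s hs => ?_
  let f' : Y → s := fun y => ⟨f y, Set.mem_sInter.1 (hf y) s hs⟩
  rw [show f = Subtype.val ∘ f' from rfl, map_ofHom_comp]
  exact hs.2 _

end

variable {κ : Cardinal.{u}} {hκ : κ.IsRegular} {T : Monad (Type u)}
  (A : TensorAlg T (Pstar κ hκ))

theorem β_eta (x : A.carrier) : A.β (PstarObj.eta hκ x) = x :=
  A.β_unit x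

theorem β_pairEl_β (s t : PstarObj κ A.carrier) :
    A.β (pairEl hκ (A.β s) (A.β t)) = A.β (PstarObj.mu hκ (pairEl hκ s t)) :=
  ((A.β_mul _).trans (congrArg A.β (map_pairEl _ _ _))).symm

theorem le_refl (x : A.carrier) : A.le x x := by
  rw [TensorAlg.le,
    show pairEl hκ x x = PstarObj.eta hκ x from Subtype.ext (Set.pair_eq_singleton x)]
  exact A.β_eta x

theorem le_β_of_mem {s : PstarObj κ A.carrier} {a : A.carrier} (ha : a ∈ s.1) :
    A.le a (A.β s) :=
  calc A.β (pairEl hκ a (A.β s))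
      = A.β (pairEl hκ (A.β (PstarObj.eta hκ a)) (A.β s)) := by rw [A.β_eta]
    _ = A.β (PstarObj.mu hκ (pairEl hκ (PstarObj.eta hκ a) s)) := A.β_pairEl_β _ _
    _ = A.β s := congrArg A.β <| Subtype.ext <| by simp [Set.insert_eq_self.mpr ha]

theorem le_trans {x y z : A.carrier} (hxy : A.le x y) (hyz : A.le y z) : A.le x z :=
  calc A.β (pairEl hκ x z)
      = A.β (pairEl hκ (A.β (PstarObj.eta hκ x)) (A.β (pairEl hκ y z))) := by
        rw [A.β_eta, hyz]
    _ = A.β (PstarObj.mu hκ (pairEl hκ (PstarObj.eta hκ x) (pairEl hκ y z))) :=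
        A.β_pairEl_β _ _
    _ = A.β (PstarObj.mu hκ (pairEl hκ (pairEl hκ x y) (PstarObj.eta hκ z))) :=
        congrArg A.β <| Subtype.ext <| by simp [Set.insert_comm, Set.pair_comm]
    _ = A.β (pairEl hκ (A.β (pairEl hκ x y)) (A.β (PstarObj.eta hκ z))) :=
        (A.β_pairEl_β _ _).symm
    _ = z := by rw [hxy, A.β_eta, hyz]

/-- The tensor law applied to the pairs `{f y, g y} ∈ P*κ` reads
`α (T g p) = α (T f p) ∨ α (T g p)`. -/
theorem α_map_le_α_map {Y : Type u} {f g : Y → A.carrier} (h : ∀ y, A.le (f y) (g y))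
    (p : T.obj Y) :
    A.le (A.α (T.map (TypeCat.ofHom f) p)) (A.α (T.map (TypeCat.ofHom g) p)) := by
  let F : Y × ULift.{u} Bool → A.carrier := fun yb => cond yb.2.down (g yb.1) (f yb.1)
  have hjoin : (fun y => A.β ((Pstar κ hκ).map (TypeCat.ofHom fun b => F (y, b))
      (pairEl hκ (ULift.up false) (ULift.up true)))) = g :=
    funext fun y => (congrArg A.β (map_pairEl _ _ _)).trans (h y)
  have htensor := A.tensor_law p (pairEl hκ (ULift.up false) (ULift.up true)) F
  rw [hjoin, map_pairEl] at htensor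
  exact htensor.symm

def upperClosure (Y : Set A.carrier) : Set A.carrier :=
  {x | ∃ t ∈ Y, A.le t x}

theorem closed_upperClosure_tClosure (X : Set A.carrier) :
    A.Closed (A.upperClosure (A.TClosure X)) := by
  constructor
  · intro m
    choose t ht hle using fun a : A.upperClosure (A.TClosure X) => a.2
    exact ⟨_, A.α_map_mem_tClosure t ht m, A.α_map_le_α_map hle m⟩
  · intro m
    obtain ⟨a, ha⟩ := ((Pstar κ hκ).map (TypeCat.ofHom Subtype.val) m).2.1
    obtain ⟨⟨_, t, ht, hle⟩, hm, rfl⟩ := ha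
    exact ⟨t, ht, A.le_trans hle (A.le_β_of_mem ⟨_, hm, rfl⟩)⟩

end TensorAlg

theorem exists_le_of_mem_tensorAlg_general {κ : Cardinal.{u}} (hκ : κ.IsRegular)
    (T : Monad (Type u))
    (A : TensorAlg T (Pstar κ hκ)) (Xhat : Set A.carrier) (hgen : A.GeneratedBy Xhat)
    (x : A.carrier) :
    ∃ t ∈ A.TClosure Xhat, A.le t x :=
  Set.eq_univ_iff_forall.1
    (hgen _ (A.closed_upperClosure_tClosure Xhat)
      fun a ha => ⟨a, A.subset_tClosure Xhat ha, A.le_refl a⟩) x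

/-- Lemma 4.1: in a `(P*κ, T)`-tensor algebra generated by `X̂` (for `κ` regular and
uncountable), every element lies above some element of the `T`-subalgebra `T``X̂`
generated by `X̂`. -/
theorem exists_le_of_mem_tensorAlg {κ : Cardinal.{u}} (hκ : κ.IsRegular)
    (hunc : Cardinal.aleph0 < κ) (T : Monad (Type u))
    (A : TensorAlg T (Pstar κ hκ)) (Xhat : Set A.carrier) (hgen : A.GeneratedBy Xhat)
    (x : A.carrier) :
    ∃ t ∈ A.TClosure Xhat, A.le t x :=
  exists_le_of_mem_tensorAlg_general hκ T A Xhat hgen x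
end
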